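/- If during a time interval of length L at least c doors are active and (counting door-pixel delays) at least one unit of progress (robot emission or delay) occurs at each active door per time step, then the number of robots emitted plus delays during the interval is at least c·L; consequently, if the frontier cut at the interval's start has size at most 2c, the optimal makespan is at least L/2 minus the total number of door-pixel delays divided by 2c. -/

import Mathlib

/-- During a time interval of length `L` with at least `c` active doors, each of
which makes at least one unit of progress (robot emission or door-pixel delay)
per step, the emitted robots plus delays total at least `c·L`.  If the frontier
cut at the start of the interval has size `cut ≤ 2c` and the optimal makespan
satisfies `OPT ≥ emitted / cut`, then `OPT ≥ L/2 - delays/(2c)`. -/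
theorem active_doors_interval_progress
    (L c emitted delays : ℕ) (hc : 0 < c)
    (prog : ℕ → ℕ)
    (hprog : ∀ s < L, c ≤ prog s)
    (hsum : emitted + delays = ∑ s ∈ Finset.range L, prog s)
    (OPT cut : ℝ) (hcutpos : 0 < cut) (hcut : cut ≤ 2 * c)
    (hOPT : (emitted : ℝ) / cut ≤ OPT) :
    c * L ≤ emitted + delays ∧
    (L : ℝ) / 2 - (delays : ℝ) / (2 * c) ≤ OPT := by
  have h1 : c * L ≤ emitted + delays := by
    rw [hsum]
    calc c * L = ∑ s ∈ Finset.range L, c := by simp [mul_comm]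
    _ ≤ ∑ s ∈ Finset.range L, prog s :=
      Finset.sum_le_sum fun s hs => hprog s (Finset.mem_range.mp hs)
  refine ⟨h1, ?_⟩
  have hcR : (0 : ℝ) < 2 * c := by positivity
  have h2 : ((c : ℝ) * L - delays) / (2 * c) ≤ (emitted : ℝ) / cut := by
    have hnum : (c : ℝ) * L - delays ≤ emitted := by
      have : ((c * L : ℕ) : ℝ) ≤ ((emitted + delays : ℕ) : ℝ) := by exact_mod_cast h1
      push_cast at this
      linarith
    calc ((c : ℝ) * L - delays) / (2 * c) ≤ (emitted : ℝ) / (2 * c) := by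
          gcongr
    _ ≤ (emitted : ℝ) / cut := by
          apply div_le_div_of_nonneg_left (by positivity) hcutpos hcut
  have heq : ((c : ℝ) * L - delays) / (2 * c) = (L : ℝ) / 2 - (delays : ℝ) / (2 * c) := by
    field_simp
  linarith [h2.trans hOPT]
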